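/- arXiv:1407.7090 — 3 statements merged into one kernel-verified Lean document; each statement's English description precedes it below -/
import Mathlib

section
/- Let 0<q<1 and let f(x,t) = ∑_{m=0}^d a_m(t)·x^m be a polynomial of degree d in x whose coefficients a_m:[0,∞)→ℝ are bounded on (0,ε] for some ε>0. For t>0 define b_m(t) := t^{−m} ∫_ℝ f(x,t) h_m(x;t) γ_t(dx), 0≤m≤d. Then: (i) each b_m is bounded on (0,ε]; (ii) if moreover there exist C≥0 and δ>0 with |a_m(t) − a_m(0)| ≤ C·t^δ for all t∈(0,ε] and all m, then, setting b_m(0) := [m]_q!·a_m(0), there exist C'≥0 and δ'>0 with |b_m(t) − b_m(0)| ≤ C'·t^{δ'} for all t∈(0,ε] and all m. -/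
open MeasureTheory

/-- `[n]_q = 1 + q + ⋯ + q^{n-1}`. -/
noncomputable def qNat (q : ℝ) (n : ℕ) : ℝ := ∑ i ∈ Finset.range n, q ^ i

/-- `[n]_q! = [1]_q [2]_q ⋯ [n]_q`. -/
noncomputable def qFact (q : ℝ) (n : ℕ) : ℝ := ∏ i ∈ Finset.range n, qNat q (i + 1)

/-- Monic continuous q-Hermite polynomials: `h_0 = 1`, `h_1 = x`,
`x·h_n(x;t) = h_{n+1}(x;t) + t·[n]_q·h_{n−1}(x;t)`. -/
noncomputable def qH (q : ℝ) : ℕ → ℝ → ℝ → ℝ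
  | 0, _, _ => 1
  | 1, x, _ => x
  | (n + 2), x, t => x * qH q (n + 1) x t - t * qNat q (n + 1) * qH q n x t

/-!
Multiplying the q-Hermite expansion `x^j = ∑_k c_{jk}(t) h_k(x;t)` by `x` and using the
three-term recurrence gives a recursion for the connection coefficients `c_{jk}(t)` which shows
that they are polynomials in `t` with `c_{jk}(0) = δ_{jk}`. Against `γ_t` only `h_0 = 1` has
nonzero mean, so `∫ x^j h_m dγ_t = c_{jm}(t) [m]_q! t^m` and therefore
`b_m(t) = [m]_q! ∑_j a_j(t) c_{jm}(t) = [m]_q! a_m(t) + O(t)` uniformly on `(0, ε]`.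
-/

open Set Filter Asymptotics

lemma continuous_qH (q t : ℝ) : ∀ n, Continuous fun x : ℝ => qH q n x t
  | 0 => continuous_const
  | 1 => continuous_id
  | n + 2 => by
      simp only [qH]
      exact (continuous_id.mul (continuous_qH q t (n + 1))).sub
        (continuous_const.mul (continuous_qH q t n))

lemma mul_qH (q x t : ℝ) : ∀ n : ℕ,
    x * qH q n x t = qH q (n + 1) x t + t * qNat q n * qH q (n - 1) x t
  | 0 => by simp [qH, qNat]
  | n + 1 => by simp only [qH, Nat.add_sub_cancel]; ring

/-- `powCoeff q j k t` is the coefficient of `h_k(·;t)` in the expansion of `x^j` in the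
q-Hermite basis. -/
noncomputable def powCoeff (q : ℝ) : ℕ → ℕ → ℝ → ℝ
  | 0, k, _ => if k = 0 then 1 else 0
  | j + 1, k, t => (if k = 0 then 0 else powCoeff q j (k - 1) t)
      + t * qNat q (k + 1) * powCoeff q j (k + 1) t

lemma integral_pow_mul_qH {μ : Measure ℝ} {q t : ℝ}
    (hint : ∀ i k, Integrable (fun x => x ^ i * qH q k x t) μ)
    (hmean : ∀ m, ∫ x, qH q m x t ∂μ = if m = 0 then 1 else 0) (j m : ℕ) :
    ∫ x, x ^ j * qH q m x t ∂μ = powCoeff q j m t * (qFact q m * t ^ m) := by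
  induction j generalizing m with
  | zero => by_cases hm : m = 0 <;> simp [hm, hmean, powCoeff, qFact]
  | succ j ih =>
    have hsplit : (fun x => x ^ (j + 1) * qH q m x t) = fun x =>
        x ^ j * qH q (m + 1) x t + t * qNat q m * (x ^ j * qH q (m - 1) x t) := by
      funext x
      rw [pow_succ, mul_assoc, mul_qH]
      ring
    rw [hsplit, integral_add (hint j _) ((hint j _).const_mul _), integral_const_mul, ih, ih]
    rcases m with _ | m
    · simp [powCoeff, qNat, qFact, mul_comm]
    · simp only [powCoeff, qFact, Finset.prod_range_succ, Nat.add_sub_cancel, add_eq_zero,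
        one_ne_zero, and_false, if_false]
      ring

lemma integral_poly_mul_qH {μ : Measure ℝ} {q t : ℝ}
    (hint : ∀ i k, Integrable (fun x => x ^ i * qH q k x t) μ)
    (hmean : ∀ m, ∫ x, qH q m x t ∂μ = if m = 0 then 1 else 0)
    (s : Finset ℕ) (c : ℕ → ℝ) (m : ℕ) :
    ∫ x, (∑ j ∈ s, c j * x ^ j) * qH q m x t ∂μ
      = qFact q m * t ^ m * ∑ j ∈ s, c j * powCoeff q j m t := by
  have hterm (j : ℕ) : ∫ x, c j * x ^ j * qH q m x t ∂μ
      = qFact q m * t ^ m * (c j * powCoeff q j m t) := by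
    simp only [mul_assoc, integral_const_mul, integral_pow_mul_qH hint hmean]
    ring
  simp only [Finset.sum_mul]
  rw [integral_finsetSum s fun j _ => by simpa only [mul_assoc] using (hint j m).const_mul (c j),
    Finset.mul_sum]
  exact Finset.sum_congr rfl fun j _ => hterm j

lemma integrable_of_abs_le_ae {μ : Measure ℝ} [IsFiniteMeasure μ] {R : ℝ}
    (hμ : μ {x : ℝ | |x| ≤ R}ᶜ = 0) {f : ℝ → ℝ} (hf : Continuous f) : Integrable f μ := by
  have hcompact : IsCompact {x : ℝ | |x| ≤ R} := by
    simpa [Metric.closedBall, Real.dist_eq] using isCompact_closedBall (0 : ℝ) R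
  rw [← Measure.restrict_eq_self_of_ae_mem (ae_iff.mpr hμ)]
  exact hf.continuousOn.integrableOn_compact hcompact

lemma exists_nonneg_forall_abs_le_of_forall_isBigO {ι α : Type*} {s : Finset ι} {S : Set α}
    {f : ι → α → ℝ} {g : α → ℝ} (h : ∀ i ∈ s, f i =O[𝓟 S] g) :
    ∃ C, 0 ≤ C ∧ ∀ i ∈ s, ∀ x ∈ S, |f i x| ≤ C * ‖g x‖ := by
  obtain ⟨C, hC, hbound⟩ := (IsBigO.sum fun i hi => (h i hi).abs_left).exists_nonneg
  refine ⟨C, hC, fun i hi x hx => le_trans ?_ (isBigOWith_principal.mp hbound x hx)⟩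
  rw [Finset.sum_apply, Real.norm_of_nonneg (Finset.sum_nonneg fun j _ => abs_nonneg _)]
  exact Finset.single_le_sum (f := fun j => |f j x|) (fun j _ => abs_nonneg _) hi

lemma isBigO_principal_one_iff {α : Type*} {S : Set α} {f : α → ℝ} :
    f =O[𝓟 S] (fun _ => (1 : ℝ)) ↔ ∃ M, ∀ x ∈ S, |f x| ≤ M := by
  simp only [isBigO_principal, norm_one, mul_one, Real.norm_eq_abs]

section SmallTime

variable {ε : ℝ}

lemma isBigO_id_one_Ioc : (fun t : ℝ => t) =O[𝓟 (Ioc 0 ε)] fun _ => (1 : ℝ) :=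
  isBigO_principal.mpr ⟨ε, fun t ht => by simpa [abs_of_pos ht.1] using ht.2⟩

lemma rpow_isBigO_rpow_Ioc {δ δ' : ℝ} (h : δ' ≤ δ) :
    (fun t : ℝ => t ^ δ) =O[𝓟 (Ioc 0 ε)] fun t => t ^ δ' := by
  refine isBigO_principal.mpr ⟨ε ^ (δ - δ'), fun t ht => ?_⟩
  rw [Real.norm_of_nonneg (Real.rpow_nonneg ht.1.le _),
    Real.norm_of_nonneg (Real.rpow_nonneg ht.1.le _), ← sub_add_cancel δ δ',
    Real.rpow_add ht.1, add_sub_cancel_right]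
  exact mul_le_mul_of_nonneg_right (Real.rpow_le_rpow ht.1.le ht.2 (by linarith))
    (Real.rpow_nonneg ht.1.le _)

lemma isBigO_rpow_Ioc_iff {δ : ℝ} {f : ℝ → ℝ} :
    f =O[𝓟 (Ioc 0 ε)] (fun t => t ^ δ) ↔ ∃ C, ∀ t ∈ Ioc 0 ε, |f t| ≤ C * t ^ δ := by
  rw [isBigO_principal]
  refine exists_congr fun C => forall₂_congr fun t ht => ?_
  rw [Real.norm_eq_abs, Real.norm_of_nonneg (Real.rpow_nonneg ht.1.le δ)]

lemma isBigO_one_of_sub_isBigO_id {f g : ℝ → ℝ}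
    (h : (fun t => f t - g t) =O[𝓟 (Ioc 0 ε)] fun t => t)
    (hg : g =O[𝓟 (Ioc 0 ε)] fun _ => (1 : ℝ)) : f =O[𝓟 (Ioc 0 ε)] fun _ => (1 : ℝ) := by
  simpa using (h.trans isBigO_id_one_Ioc).add hg

lemma powCoeff_sub_isBigO (q : ℝ) : ∀ j k : ℕ,
    (fun t => powCoeff q j k t - if k = j then 1 else 0) =O[𝓟 (Ioc 0 ε)] fun t => t
  | 0, k => by simp [powCoeff, isBigO_zero]
  | j + 1, k => by
    have hnext : (fun t => t * qNat q (k + 1) * powCoeff q j (k + 1) t)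
        =O[𝓟 (Ioc 0 ε)] fun t => t := by
      have hbdd := isBigO_one_of_sub_isBigO_id (powCoeff_sub_isBigO q j (k + 1))
        (isBigO_const_one ℝ _ _)
      simpa [mul_assoc] using (isBigO_refl (fun t : ℝ => t) _).mul (hbdd.const_mul_left _)
    rcases k with _ | k
    · simpa [powCoeff] using hnext
    · simpa [powCoeff, add_sub_right_comm] using (powCoeff_sub_isBigO q j k).add hnext

lemma sum_mul_powCoeff_sub_isBigO {q : ℝ} {s : Finset ℕ} {a : ℕ → ℝ → ℝ} {m : ℕ} (hm : m ∈ s)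
    (ha : ∀ j ∈ s, (fun t => a j t) =O[𝓟 (Ioc 0 ε)] fun _ => (1 : ℝ)) :
    (fun t => ∑ j ∈ s, a j t * powCoeff q j m t - a m t) =O[𝓟 (Ioc 0 ε)] fun t => t := by
  simpa [Finset.sum_fn, mul_sub, Finset.sum_sub_distrib, hm] using
    IsBigO.sum fun j hj => (ha j hj).mul (powCoeff_sub_isBigO q j m)

end SmallTime

theorem qHermite_expansion_coefficients_bounded_general
    (q : ℝ)
    (γ : ℝ → Measure ℝ)
    (hprob : ∀ t : ℝ, 0 < t → IsProbabilityMeasure (γ t))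
    (hsupp : ∀ t : ℝ, 0 < t →
      γ t {x : ℝ | |x| ≤ 2 * Real.sqrt t / Real.sqrt (1 - q)}ᶜ = 0)
    (horth : ∀ t : ℝ, 0 < t → ∀ m n : ℕ,
      ∫ x, qH q n x t * qH q m x t ∂(γ t) = if m = n then qFact q n * t ^ n else 0)
    (d : ℕ) (a : ℕ → ℝ → ℝ) (ε : ℝ)
    (ha : ∀ m ≤ d, ∃ M : ℝ, ∀ t ∈ Set.Ioc (0 : ℝ) ε, |a m t| ≤ M)
    (b : ℕ → ℝ → ℝ)
    (hbdef : ∀ m ≤ d, ∀ t : ℝ, 0 < t →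
      b m t = t ^ (-(m : ℤ)) *
        ∫ x, (∑ j ∈ Finset.range (d + 1), a j t * x ^ j) * qH q m x t ∂(γ t))
    (hb0 : ∀ m ≤ d, b m 0 = qFact q m * a m 0) :
    (∀ m ≤ d, ∃ M : ℝ, ∀ t ∈ Set.Ioc (0 : ℝ) ε, |b m t| ≤ M) ∧
    ((∃ C δ : ℝ, 0 ≤ C ∧ 0 < δ ∧
        ∀ m ≤ d, ∀ t ∈ Set.Ioc (0 : ℝ) ε, |a m t - a m 0| ≤ C * t ^ δ) →
      ∃ C' δ' : ℝ, 0 ≤ C' ∧ 0 < δ' ∧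
        ∀ m ≤ d, ∀ t ∈ Set.Ioc (0 : ℝ) ε, |b m t - b m 0| ≤ C' * t ^ δ') := by
  have hb (m : ℕ) (hm : m ≤ d) (t : ℝ) (ht : 0 < t) :
      b m t = qFact q m * ∑ j ∈ Finset.range (d + 1), a j t * powCoeff q j m t := by
    have := hprob t ht
    have hint (i k : ℕ) : Integrable (fun x => x ^ i * qH q k x t) (γ t) :=
      integrable_of_abs_le_ae (hsupp t ht) ((continuous_pow i).mul (continuous_qH q t k))
    have hmean (k : ℕ) : ∫ x, qH q k x t ∂(γ t) = if k = 0 then 1 else 0 := by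
      simpa [qH, qFact] using horth t ht k 0
    rw [hbdef m hm t ht, integral_poly_mul_qH hint hmean, zpow_neg, zpow_natCast]
    field_simp
  have ha_bdd (j : ℕ) (hj : j ∈ Finset.range (d + 1)) :
      (fun t => a j t) =O[𝓟 (Ioc 0 ε)] fun _ => (1 : ℝ) :=
    isBigO_principal_one_iff.mpr (ha j (Finset.mem_range_succ_iff.mp hj))
  have hsum (m : ℕ) (hm : m ∈ Finset.range (d + 1)) :
      (fun t => ∑ j ∈ Finset.range (d + 1), a j t * powCoeff q j m t - a m t)
        =O[𝓟 (Ioc 0 ε)] fun t => t :=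
    sum_mul_powCoeff_sub_isBigO hm ha_bdd
  refine ⟨fun m hm => ?_, fun ⟨C, δ, _, hδ, hHol⟩ => ?_⟩
  · have hm' := Finset.mem_range_succ_iff.mpr hm
    obtain ⟨M, hM⟩ := isBigO_principal_one_iff.mp
      ((isBigO_one_of_sub_isBigO_id (hsum m hm') (ha_bdd m hm')).const_mul_left (qFact q m))
    exact ⟨M, fun t ht => by simpa [hb m hm t ht.1] using hM t ht⟩
  · have hdiff (m : ℕ) (hm : m ∈ Finset.range (d + 1)) :
        (fun t => b m t - b m 0) =O[𝓟 (Ioc 0 ε)] fun t => t ^ min δ 1 := by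
      have hm' := Finset.mem_range_succ_iff.mp hm
      have hHolO := isBigO_rpow_Ioc_iff.mpr ⟨C, hHol m hm'⟩
      have hid : (fun t : ℝ => t) =O[𝓟 (Ioc 0 ε)] fun t => t ^ min δ 1 := by
        simpa using rpow_isBigO_rpow_Ioc (ε := ε) (min_le_right δ 1)
      refine IsBigO.congr' ((((hsum m hm).trans hid).add
        (hHolO.trans (rpow_isBigO_rpow_Ioc (min_le_left δ 1)))).const_mul_left (qFact q m))
        (eventually_principal.mpr fun t ht => ?_) EventuallyEq.rfl
      simp only [hb m hm' t ht.1, hb0 m hm']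
      ring
    obtain ⟨C', hC', hbound⟩ := exists_nonneg_forall_abs_le_of_forall_isBigO hdiff
    refine ⟨C', min δ 1, hC', lt_min hδ one_pos, fun m hm t ht => ?_⟩
    simpa [abs_of_pos (Real.rpow_pos_of_pos ht.1 _)] using
      hbound m (Finset.mem_range_succ_iff.mpr hm) t ht

/-- if `f(x,t) = ∑_{m≤d} a_m(t) x^m` has coefficients bounded on `(0,ε]`,
then the q-Hermite expansion coefficients `b_m(t) = t^{−m} ∫ f(x,t) h_m(x;t) γ_t(dx)`
are bounded on `(0,ε]`; and if the `a_m` satisfy a Hölder bound `|a_m(t) − a_m(0)| ≤ C t^δ`,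
then (with `b_m(0) := [m]_q!·a_m(0)`) the `b_m` satisfy a Hölder bound
`|b_m(t) − b_m(0)| ≤ C' t^{δ'}` on `(0,ε]`. -/
theorem qHermite_expansion_coefficients_bounded
    (q : ℝ) (hq0 : 0 < q) (hq1 : q < 1)
    (γ : ℝ → Measure ℝ)
    (hprob : ∀ t : ℝ, 0 < t → IsProbabilityMeasure (γ t))
    (hsupp : ∀ t : ℝ, 0 < t →
      γ t {x : ℝ | |x| ≤ 2 * Real.sqrt t / Real.sqrt (1 - q)}ᶜ = 0)
    (horth : ∀ t : ℝ, 0 < t → ∀ m n : ℕ,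
      ∫ x, qH q n x t * qH q m x t ∂(γ t) = if m = n then qFact q n * t ^ n else 0)
    (hpush : ∀ t : ℝ, 0 < t → γ t = Measure.map (fun x => Real.sqrt t * x) (γ 1))
    (d : ℕ) (a : ℕ → ℝ → ℝ) (ε : ℝ) (hε : 0 < ε)
    (ha : ∀ m ≤ d, ∃ M : ℝ, ∀ t ∈ Set.Ioc (0 : ℝ) ε, |a m t| ≤ M)
    (b : ℕ → ℝ → ℝ)
    (hbdef : ∀ m ≤ d, ∀ t : ℝ, 0 < t →
      b m t = t ^ (-(m : ℤ)) *
        ∫ x, (∑ j ∈ Finset.range (d + 1), a j t * x ^ j) * qH q m x t ∂(γ t))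
    (hb0 : ∀ m ≤ d, b m 0 = qFact q m * a m 0) :
    (∀ m ≤ d, ∃ M : ℝ, ∀ t ∈ Set.Ioc (0 : ℝ) ε, |b m t| ≤ M) ∧
    ((∃ C δ : ℝ, 0 ≤ C ∧ 0 < δ ∧
        ∀ m ≤ d, ∀ t ∈ Set.Ioc (0 : ℝ) ε, |a m t - a m 0| ≤ C * t ^ δ) →
      ∃ C' δ' : ℝ, 0 ≤ C' ∧ 0 < δ' ∧
        ∀ m ≤ d, ∀ t ∈ Set.Ioc (0 : ℝ) ε, |b m t - b m 0| ≤ C' * t ^ δ') :=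
  qHermite_expansion_coefficients_bounded_general q γ hprob hsupp horth d a ε ha b hbdef hb0
end

section
/- Let 0<q<1, s>0 and m≥1. Then for every x∈ℝ the monic continuous q-Hermite polynomials satisfy the identity x·(h_m(x;s) − h_m(x;qs)) − (h_{m+1}(x;s) − h_{m+1}(x;qs)) − s·[m]_q·(h_{m−1}(x;s) − h_{m−1}(x;qs)) = (1−q)·s·[m]_q·h_{m−1}(x;qs). Equivalently, with (𝒟_{q,s} g)(s) := (g(s) − g(qs))/((1−q)s), the operator A defined on the basis {h_j(·;s)} by A(h_m(·;s))(x) := x·(𝒟_{q,s} h_m(x;·))(s) − (𝒟_{q,s} h_{m+1}(x;·))(s) − s·[m]_q·(𝒟_{q,s} h_{m−1}(x;·))(s) satisfies A(h_m(·;s)) = [m]_q·h_{m−1}(·;qs). -/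
theorem qH_add_two (q : ℝ) (n : ℕ) (x t : ℝ) :
    qH q (n + 2) x t = x * qH q (n + 1) x t - t * qNat q (n + 1) * qH q n x t := by
  rw [qH]

theorem qHermite_auxiliary_operator_general (q : ℝ)
    (s : ℝ) (m : ℕ) (hm : 1 ≤ m) (x : ℝ) :
    x * (qH q m x s - qH q m x (q * s)) -
      (qH q (m + 1) x s - qH q (m + 1) x (q * s)) -
      s * qNat q m * (qH q (m - 1) x s - qH q (m - 1) x (q * s)) =
    (1 - q) * s * qNat q m * qH q (m - 1) x (q * s) := by
  obtain ⟨k, rfl⟩ := Nat.exists_eq_add_of_le' hm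
  rw [Nat.add_sub_cancel, qH_add_two, qH_add_two]
  ring

/-- Lemma identifying the auxiliary operator `A` on q-Hermite polynomials:
for `s > 0` and `m ≥ 1`,
`x·(h_m(x;s) − h_m(x;qs)) − (h_{m+1}(x;s) − h_{m+1}(x;qs)) − s·[m]_q·(h_{m−1}(x;s) − h_{m−1}(x;qs))
  = (1−q)·s·[m]_q·h_{m−1}(x;qs)`,
i.e. `A(h_m(·;s)) = [m]_q·h_{m−1}(·;qs)`. -/
theorem qHermite_auxiliary_operator (q : ℝ) (hq0 : 0 < q) (hq1 : q < 1)
    (s : ℝ) (hs : 0 < s) (m : ℕ) (hm : 1 ≤ m) (x : ℝ) :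
    x * (qH q m x s - qH q m x (q * s)) -
      (qH q (m + 1) x s - qH q (m + 1) x (q * s)) -
      s * qNat q m * (qH q (m - 1) x s - qH q (m - 1) x (q * s)) =
    (1 - q) * s * qNat q m * qH q (m - 1) x (q * s) :=
  qHermite_auxiliary_operator_general q s m hm x
end

section
/- Let 0<q<1 and let (B_s)_{s≥0} satisfy the q-Brownian hypotheses. Then for all 0 ≤ t₁ < t₂ ≤ u₁ < u₂: E[(B_{t₂} − B_{t₁})²·(B_{u₂} − B_{u₁})²] = (u₂ − u₁)·(t₂ − t₁). -/
/-!
The martingale property of `h₁(x) = x` and `h₂(x; t) = x² - t` says that `B` and `B² - t`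
are martingales, so the square of an increment has constant conditional
expectation `E[(B_u - B_s)² | ℱ_s] = u - s`. Conditioning on `ℱ_{u₁}` and pulling out the
`ℱ_{u₁}`-measurable factor `(B_{t₂} - B_{t₁})²` then gives
`E[(B_{t₂} - B_{t₁})² (B_{u₂} - B_{u₁})²] = (u₂ - u₁) E[(B_{t₂} - B_{t₁})²] = (u₂ - u₁)(t₂ - t₁)`.
-/

open MeasureTheory Filter

lemma qH_two (q x t : ℝ) : qH q 2 x t = x ^ 2 - t := by
  simp only [qH, qNat, zero_add, Finset.sum_range_one, pow_zero, mul_one]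
  ring

section CondExp

variable {Ω : Type*} {m m0 : MeasurableSpace Ω} {μ : Measure Ω}

lemma MeasureTheory.MemLp.sq_of_top {f : Ω → ℝ} (hf : MemLp f ⊤ μ) :
    MemLp (fun ω => f ω ^ 2) ⊤ μ := by
  convert hf.mul (r := ⊤) hf using 1
  funext ω
  exact sq (f ω)

lemma condExp_sub_sq_of_condExp [IsFiniteMeasure μ] (hm : m ≤ m0) {X Y : Ω → ℝ} {a b : ℝ}
    (hXm : StronglyMeasurable[m] X) (hX : MemLp X 2 μ) (hY : MemLp Y 2 μ)
    (h₁ : μ[Y | m] =ᵐ[μ] X) (h₂ : μ[fun ω => Y ω ^ 2 - a | m] =ᵐ[μ] fun ω => X ω ^ 2 - b) :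
    μ[fun ω => (Y ω - X ω) ^ 2 | m] =ᵐ[μ] fun _ => a - b := by
  have hsplit : (fun ω => (Y ω - X ω) ^ 2)
      = (fun ω => Y ω ^ 2 - a) - (2 : ℝ) • (X * Y) + fun ω => X ω ^ 2 + a := by
    funext ω
    simp only [Pi.add_apply, Pi.sub_apply, Pi.smul_apply, Pi.mul_apply, smul_eq_mul]
    ring
  have iY2 : Integrable (fun ω => Y ω ^ 2 - a) μ := hY.integrable_sq.sub (integrable_const a)
  have iXY : Integrable (X * Y) μ := hX.integrable_mul hY
  have iX2 : Integrable (fun ω => X ω ^ 2 + a) μ := hX.integrable_sq.add (integrable_const a)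
  have hpull : μ[X * Y | m] =ᵐ[μ] X * X :=
    (condExp_mul_of_stronglyMeasurable_left hXm iXY (hY.integrable one_le_two)).trans
      (EventuallyEq.rfl.mul h₁)
  have hX2 : μ[fun ω => X ω ^ 2 + a | m] = fun ω => X ω ^ 2 + a :=
    condExp_of_stronglyMeasurable hm ((hXm.pow 2).add stronglyMeasurable_const) iX2
  rw [hsplit]
  refine (condExp_add (iY2.sub (iXY.smul (2 : ℝ))) iX2 m).trans ?_
  rw [hX2]
  filter_upwards [condExp_sub iY2 (iXY.smul (2 : ℝ)) m, condExp_smul (2 : ℝ) (X * Y) m,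
    h₂, hpull] with ω hsub hsmul hY2 hXY
  simp only [Pi.add_apply, hsub, Pi.sub_apply, hsmul, Pi.smul_apply, hY2, hXY, Pi.mul_apply,
    smul_eq_mul]
  ring

lemma integral_eq_of_condExp_eq_const [IsProbabilityMeasure μ] (hm : m ≤ m0)
    [SigmaFinite (μ.trim hm)] {Y : Ω → ℝ} {c : ℝ} (hYc : μ[Y | m] =ᵐ[μ] fun _ => c) :
    ∫ ω, Y ω ∂μ = c := by
  rw [← integral_condExp hm, integral_congr_ae hYc, integral_const, probReal_univ, one_smul]

lemma integral_mul_eq_of_condExp_eq_const (hm : m ≤ m0) [SigmaFinite (μ.trim hm)]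
    {X Y : Ω → ℝ} {c : ℝ} (hXm : StronglyMeasurable[m] X) (hXY : Integrable (X * Y) μ)
    (hY : Integrable Y μ) (hYc : μ[Y | m] =ᵐ[μ] fun _ => c) :
    ∫ ω, X ω * Y ω ∂μ = c * ∫ ω, X ω ∂μ := by
  have hpull : μ[X * Y | m] =ᵐ[μ] fun ω => X ω * c :=
    (condExp_mul_of_stronglyMeasurable_left hXm hXY hY).trans (EventuallyEq.rfl.mul hYc)
  calc ∫ ω, X ω * Y ω ∂μ = ∫ ω, (μ[X * Y | m]) ω ∂μ := (integral_condExp hm).symm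
    _ = ∫ ω, X ω * c ∂μ := integral_congr_ae hpull
    _ = c * ∫ ω, X ω ∂μ := by rw [integral_mul_const, mul_comm]

end CondExp

theorem q_brownian_square_square_moment_general
    {Ω : Type*} [m0 : MeasurableSpace Ω] (μ : Measure Ω) [IsProbabilityMeasure μ]
    (ℱ : Filtration ℝ m0) (q : ℝ)
    (B : ℝ → Ω → ℝ) (hadp : Adapted ℱ B)
    (hbdd : ∀ s : ℝ, 0 ≤ s → ∀ᵐ ω ∂μ, |B s ω| ≤ 2 * Real.sqrt s / Real.sqrt (1 - q))
    (hmart : ∀ (n : ℕ) (s u : ℝ), 0 ≤ s → s ≤ u →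
      μ[fun ω => qH q n (B u ω) u | ℱ s] =ᵐ[μ] fun ω => qH q n (B s ω) s)
    (t₁ t₂ u₁ u₂ : ℝ) (ht₁ : 0 ≤ t₁) (ht : t₁ < t₂) (htu : t₂ ≤ u₁) (hu : u₁ < u₂) :
    ∫ ω, (B t₂ ω - B t₁ ω) ^ 2 * (B u₂ ω - B u₁ ω) ^ 2 ∂μ = (u₂ - u₁) * (t₂ - t₁) := by
  have hL : ∀ s, 0 ≤ s → ∀ p, MemLp (B s) p μ := fun s hs p =>
    MemLp.of_bound ((hadp s).stronglyMeasurable.mono (ℱ.le s)).aestronglyMeasurable _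
      (by simpa only [Real.norm_eq_abs] using hbdd s hs)
  have hincr : ∀ s u, 0 ≤ s → s ≤ u →
      μ[fun ω => (B u ω - B s ω) ^ 2 | ℱ s] =ᵐ[μ] fun _ => u - s := fun s u hs hsu =>
    condExp_sub_sq_of_condExp (ℱ.le s) (hadp s).stronglyMeasurable (hL s hs 2)
      (hL u (hs.trans hsu) 2) (hmart 1 s u hs hsu)
      (by simpa only [qH_two] using hmart 2 s u hs hsu)
  have ht₂ : 0 ≤ t₂ := ht₁.trans ht.le
  have hu₁ : 0 ≤ u₁ := ht₂.trans htu
  have hX : MemLp (fun ω => (B t₂ ω - B t₁ ω) ^ 2) ⊤ μ :=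
    ((hL t₂ ht₂ ⊤).sub (hL t₁ ht₁ ⊤)).sq_of_top
  have hY : MemLp (fun ω => (B u₂ ω - B u₁ ω) ^ 2) ⊤ μ :=
    ((hL u₂ (hu₁.trans hu.le) ⊤).sub (hL u₁ hu₁ ⊤)).sq_of_top
  have hXm : StronglyMeasurable[ℱ u₁] fun ω => (B t₂ ω - B t₁ ω) ^ 2 :=
    ((((hadp t₂).mono (ℱ.mono htu) le_rfl).sub
      ((hadp t₁).mono (ℱ.mono (ht.le.trans htu)) le_rfl)).pow_const 2).stronglyMeasurable
  rw [integral_mul_eq_of_condExp_eq_const (ℱ.le u₁) hXm ((hY.mul hX).integrable le_top)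
    (hY.integrable le_top) (hincr u₁ u₂ hu₁ hu.le),
    integral_eq_of_condExp_eq_const (ℱ.le t₁) (hincr t₁ t₂ ht₁ ht.le)]

/-- for the q-Brownian motion and `0 ≤ t₁ < t₂ ≤ u₁ < u₂`,
`E[(B_{t₂} − B_{t₁})²(B_{u₂} − B_{u₁})²] = (u₂ − u₁)(t₂ − t₁)`. -/
theorem q_brownian_square_square_moment
    {Ω : Type*} [m0 : MeasurableSpace Ω] (μ : Measure Ω) [IsProbabilityMeasure μ]
    (ℱ : Filtration ℝ m0) (q : ℝ) (hq0 : 0 < q) (hq1 : q < 1)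
    (B : ℝ → Ω → ℝ) (hadp : Adapted ℱ B) (hB0 : ∀ ω, B 0 ω = 0)
    (hbdd : ∀ s : ℝ, 0 ≤ s → ∀ᵐ ω ∂μ, |B s ω| ≤ 2 * Real.sqrt s / Real.sqrt (1 - q))
    (hmart : ∀ (n : ℕ) (s u : ℝ), 0 ≤ s → s ≤ u →
      μ[fun ω => qH q n (B u ω) u | ℱ s] =ᵐ[μ] fun ω => qH q n (B s ω) s)
    (horth : ∀ s : ℝ, 0 < s → ∀ m n : ℕ,
      ∫ ω, qH q n (B s ω) s * qH q m (B s ω) s ∂μ =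
        if m = n then qFact q n * s ^ n else 0)
    (t₁ t₂ u₁ u₂ : ℝ) (ht₁ : 0 ≤ t₁) (ht : t₁ < t₂) (htu : t₂ ≤ u₁) (hu : u₁ < u₂) :
    ∫ ω, (B t₂ ω - B t₁ ω) ^ 2 * (B u₂ ω - B u₁ ω) ^ 2 ∂μ = (u₂ - u₁) * (t₂ - t₁) :=
  q_brownian_square_square_moment_general (m0 := m0) μ ℱ q B hadp hbdd hmart t₁ t₂ u₁ u₂ ht₁ ht htu
    hu
end
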